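/- Let K be a field and q ∈ K with q nonzero and q^m ≠ 1 for all integers m ≥ 1. Then the following identity holds in the formal power series ring K⟦Z⟧: ∑_{d₁,d₂ ≥ 0} (−1)^{d₁} Z^{2d₁+d₂} q^{d₁(d₁+1)/2} · (q;q)_{d₁+d₂} / ((q;q)_{d₁}(q;q)_{d₂}) = ∑_{α₁,β₁,α₂,β₂ ≥ 0} (−1)^{β₁+α₂} Z^{2(α₁+β₁)+α₂+β₂} q^{ (α₁+β₁)(α₁+β₁+1)/2 + α₁(α₁+1)/2 + α₂(α₂+1)/2 + α₂(α₁+β₁) } / ((q;q)_{α₁}(q;q)_{β₁}(q;q)_{α₂}(q;q)_{β₂}). (Both sides are formally summable in K⟦Z⟧, the Z-order of each term being the exponent of Z shown.) -/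

import Mathlib

/-!
Each summand of the state sum splits by two instances of Cauchy's q-binomial theorem,
`∑_{α+β=n} (-1)^α q^(α(α+1)/2) x^α / ((q;q)_α (q;q)_β) = (xq;q)_n / (q;q)_n`:
at `x = 1`, `n = d₁` it gives `1`, and at `x = q^d₁`, `n = d₂` it gives
`(q;q)_{d₁+d₂} / ((q;q)_{d₁} (q;q)_{d₂})`. Multiplying the two expansions and regrouping the
quadruple sum by `d₁ = α₁ + β₁`, `d₂ = α₂ + β₂` yields the quiver form.
-/

/-- The q-Pochhammer symbol `(q;q)_n = ∏_{k=1}^{n} (1 − qᵏ)`. -/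
def pochQ {K : Type*} [Field K] (q : K) (n : ℕ) : K :=
  ∏ k ∈ Finset.range n, (1 - q ^ (k + 1))

open Finset

section Regrouping

variable {M : Type*} [AddCommMonoid M]

lemma sum_ite_eq_ite_sum_of_iff {ι : Type*} {s : Finset ι} {c : ι → Prop} [DecidablePred c]
    {P : Prop} [Decidable P] (h : ∀ x ∈ s, c x ↔ P) (f : ι → M) :
    ∑ x ∈ s, (if c x then f x else 0) = if P then ∑ x ∈ s, f x else 0 := by
  rw [sum_congr rfl fun x hx => if_congr (h x hx) rfl rfl, sum_ite_irrel, sum_const_zero]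

lemma sum_range_sum_range_eq_sum_antidiagonal (N : ℕ) (G : ℕ → ℕ → M)
    (hG : ∀ a b, N < a + b → G a b = 0) :
    ∑ a ∈ range (N + 1), ∑ b ∈ range (N + 1), G a b =
      ∑ d ∈ range (N + 1), ∑ p ∈ antidiagonal d, G p.1 p.2 := by
  rw [← sum_product', ← sum_filter_of_ne (p := fun x : ℕ × ℕ => x.1 + x.2 ≤ N)
    fun x _ hx => not_lt.1 (mt (hG x.1 x.2) hx),
    ← sum_fiberwise_of_maps_to (g := fun x : ℕ × ℕ => x.1 + x.2) (t := range (N + 1))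
      fun x hx => by simp only [mem_filter, mem_range] at hx ⊢; omega]
  refine sum_congr rfl fun d hd => sum_congr ?_ fun _ _ => rfl
  ext ⟨a, b⟩
  simp only [mem_filter, mem_product, mem_range, HasAntidiagonal.mem_antidiagonal] at hd ⊢
  omega

lemma sum_range_ite_eq_sum_range_ite_sum_antidiagonal (N : ℕ) (F : ℕ → ℕ → ℕ → ℕ → M) :
    ∑ a1 ∈ range (N + 1), ∑ b1 ∈ range (N + 1), ∑ a2 ∈ range (N + 1), ∑ b2 ∈ range (N + 1),
        (if 2 * (a1 + b1) + a2 + b2 = N then F a1 b1 a2 b2 else 0) =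
      ∑ d1 ∈ range (N + 1), ∑ d2 ∈ range (N + 1),
        if 2 * d1 + d2 = N then ∑ p ∈ antidiagonal d1, ∑ r ∈ antidiagonal d2, F p.1 p.2 r.1 r.2
        else 0 := by
  have hinner : ∀ a1 b1, ∑ a2 ∈ range (N + 1), ∑ b2 ∈ range (N + 1),
      (if 2 * (a1 + b1) + a2 + b2 = N then F a1 b1 a2 b2 else 0) =
        ∑ d2 ∈ range (N + 1),
          if 2 * (a1 + b1) + d2 = N then ∑ r ∈ antidiagonal d2, F a1 b1 r.1 r.2 else 0 := by
    intro a1 b1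
    rw [sum_range_sum_range_eq_sum_antidiagonal N _ fun a2 b2 h => if_neg (by omega)]
    exact sum_congr rfl fun d2 _ => sum_ite_eq_ite_sum_of_iff
      (fun r hr => by have := mem_antidiagonal.1 hr; omega) _
  simp_rw [hinner]
  rw [sum_range_sum_range_eq_sum_antidiagonal N _
    fun a1 b1 h => sum_eq_zero fun d2 _ => if_neg (by omega)]
  refine sum_congr rfl fun d1 _ => ?_
  rw [sum_comm]
  exact sum_congr rfl fun d2 _ => sum_ite_eq_ite_sum_of_iff
    (fun p hp => by have := mem_antidiagonal.1 hp; omega) _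

end Regrouping

section QSeries

variable {K : Type*} [Field K] (q : K)

lemma pochQ_succ (n : ℕ) : pochQ q (n + 1) = pochQ q n * (1 - q ^ (n + 1)) :=
  prod_range_succ _ _

lemma pochQ_add (m n : ℕ) :
    pochQ q (m + n) = pochQ q m * ∏ k ∈ range n, (1 - q ^ m * q ^ (k + 1)) := by
  simp only [pochQ, prod_range_add, ← pow_add, add_assoc]

lemma one_sub_pow_succ_ne_zero {q : K} (hq : ∀ m : ℕ, 1 ≤ m → q ^ m ≠ 1) (k : ℕ) :
    1 - q ^ (k + 1) ≠ 0 :=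
  sub_ne_zero.2 (hq (k + 1) k.succ_pos).symm

lemma pochQ_ne_zero {q : K} (hq : ∀ m : ℕ, 1 ≤ m → q ^ m ≠ 1) (n : ℕ) : pochQ q n ≠ 0 :=
  prod_ne_zero_iff.2 fun k _ => one_sub_pow_succ_ne_zero hq k

def qBinomialTerm (x : K) (a b : ℕ) : K :=
  (-1) ^ a * q ^ (a * (a + 1) / 2) * x ^ a / (pochQ q a * pochQ q b)

lemma one_sub_pow_mul_qBinomialTerm_succ_right (x : K) (a b : ℕ) (h : 1 - q ^ (b + 1) ≠ 0) :
    (1 - q ^ (b + 1)) * qBinomialTerm q x a (b + 1) = qBinomialTerm q x a b := by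
  rw [qBinomialTerm, qBinomialTerm, pochQ_succ]
  field_simp

lemma one_sub_pow_mul_qBinomialTerm_succ_left (x : K) (a b : ℕ) (h : 1 - q ^ (a + 1) ≠ 0) :
    (1 - q ^ (a + 1)) * qBinomialTerm q x (a + 1) b =
      -(x * q ^ (a + 1)) * qBinomialTerm q x a b := by
  have htri : (a + 1) * (a + 1 + 1) / 2 = a * (a + 1) / 2 + (a + 1) := by
    rw [show (a + 1) * (a + 1 + 1) = a * (a + 1) + 2 * (a + 1) by ring]
    omega
  rw [qBinomialTerm, qBinomialTerm, pochQ_succ, htri]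
  field_simp
  ring

lemma one_sub_pow_mul_sum_qBinomialTerm_succ (hq : ∀ m : ℕ, 1 ≤ m → q ^ m ≠ 1) (x : K) (n : ℕ) :
    (1 - q ^ (n + 1)) * ∑ p ∈ antidiagonal (n + 1), qBinomialTerm q x p.1 p.2 =
      (1 - x * q ^ (n + 1)) * ∑ p ∈ antidiagonal n, qBinomialTerm q x p.1 p.2 := by
  have hsplit : ∀ p ∈ antidiagonal (n + 1), (1 - q ^ (n + 1)) * qBinomialTerm q x p.1 p.2 =
      (1 - q ^ p.2) * qBinomialTerm q x p.1 p.2 +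
        q ^ p.2 * ((1 - q ^ p.1) * qBinomialTerm q x p.1 p.2) := by
    intro p hp
    rw [← mem_antidiagonal.1 hp, pow_add]
    ring
  rw [mul_sum, sum_congr rfl hsplit, sum_add_distrib, Nat.sum_antidiagonal_succ',
    Nat.sum_antidiagonal_succ]
  simp only [pow_zero, sub_self, zero_mul, mul_zero, zero_add,
    one_sub_pow_mul_qBinomialTerm_succ_right q x _ _ (one_sub_pow_succ_ne_zero hq _),
    one_sub_pow_mul_qBinomialTerm_succ_left q x _ _ (one_sub_pow_succ_ne_zero hq _)]
  have hshift : ∑ p ∈ antidiagonal n, q ^ p.2 * (-(x * q ^ (p.1 + 1)) * qBinomialTerm q x p.1 p.2) =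
      -(x * q ^ (n + 1)) * ∑ p ∈ antidiagonal n, qBinomialTerm q x p.1 p.2 := by
    rw [mul_sum]
    refine sum_congr rfl fun p hp => ?_
    rw [← mem_antidiagonal.1 hp, pow_add]
    ring
  rw [hshift]
  ring

theorem sum_antidiagonal_qBinomialTerm (hq : ∀ m : ℕ, 1 ≤ m → q ^ m ≠ 1) (x : K) (n : ℕ) :
    ∑ p ∈ antidiagonal n, qBinomialTerm q x p.1 p.2 =
      (∏ k ∈ range n, (1 - x * q ^ (k + 1))) / pochQ q n := by
  induction n with
  | zero => simp [qBinomialTerm, pochQ]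
  | succ n ih =>
    have h := one_sub_pow_succ_ne_zero hq n
    rw [← mul_right_inj' h, one_sub_pow_mul_sum_qBinomialTerm_succ q hq, ih, prod_range_succ,
      pochQ_succ]
    field_simp

lemma sum_antidiagonal_qBinomialTerm_one (hq : ∀ m : ℕ, 1 ≤ m → q ^ m ≠ 1) (n : ℕ) :
    ∑ p ∈ antidiagonal n, qBinomialTerm q 1 p.1 p.2 = 1 := by
  rw [sum_antidiagonal_qBinomialTerm q hq]
  simp only [one_mul]
  exact div_self (pochQ_ne_zero hq n)

lemma sum_antidiagonal_qBinomialTerm_pow (hq : ∀ m : ℕ, 1 ≤ m → q ^ m ≠ 1) (m n : ℕ) :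
    ∑ p ∈ antidiagonal n, qBinomialTerm q (q ^ m) p.1 p.2 =
      pochQ q (m + n) / (pochQ q m * pochQ q n) := by
  rw [sum_antidiagonal_qBinomialTerm q hq, pochQ_add, mul_div_mul_left _ _ (pochQ_ne_zero hq m)]

def stateSumTerm (d1 d2 : ℕ) : K :=
  (-1 : K) ^ d1 * q ^ (d1 * (d1 + 1) / 2) * pochQ q (d1 + d2) / (pochQ q d1 * pochQ q d2)

def quiverTerm (a1 b1 a2 b2 : ℕ) : K :=
  (-1 : K) ^ (b1 + a2) *
    q ^ ((a1 + b1) * (a1 + b1 + 1) / 2 + a1 * (a1 + 1) / 2 + a2 * (a2 + 1) / 2 + a2 * (a1 + b1)) /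
    (pochQ q a1 * pochQ q b1 * pochQ q a2 * pochQ q b2)

lemma quiverTerm_eq_mul_qBinomialTerm (a1 b1 a2 b2 : ℕ) :
    quiverTerm q a1 b1 a2 b2 =
      (-1) ^ (a1 + b1) * q ^ ((a1 + b1) * (a1 + b1 + 1) / 2) *
        (qBinomialTerm q 1 a1 b1 * qBinomialTerm q (q ^ (a1 + b1)) a2 b2) := by
  have hsign : (-1 : K) ^ (b1 + a2) = (-1) ^ (a1 + b1) * (-1) ^ a1 * (-1) ^ a2 := by
    have hsq : ((-1 : K) ^ a1) ^ 2 = 1 := by rw [← pow_mul, pow_mul', neg_one_sq, one_pow]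
    linear_combination (-(-1 : K) ^ (b1 + a2)) * hsq
  rw [quiverTerm, qBinomialTerm, qBinomialTerm, hsign, one_pow, ← pow_mul, pow_add, pow_add,
    pow_add, mul_comm a2]
  ring

lemma stateSumTerm_eq_sum_quiverTerm (hq : ∀ m : ℕ, 1 ≤ m → q ^ m ≠ 1) (d1 d2 : ℕ) :
    stateSumTerm q d1 d2 =
      ∑ p ∈ antidiagonal d1, ∑ r ∈ antidiagonal d2, quiverTerm q p.1 p.2 r.1 r.2 := by
  have hsplit : stateSumTerm q d1 d2 = (-1) ^ d1 * q ^ (d1 * (d1 + 1) / 2) *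
      ((∑ p ∈ antidiagonal d1, qBinomialTerm q 1 p.1 p.2) *
        ∑ r ∈ antidiagonal d2, qBinomialTerm q (q ^ d1) r.1 r.2) := by
    rw [sum_antidiagonal_qBinomialTerm_one q hq, sum_antidiagonal_qBinomialTerm_pow q hq, one_mul,
      stateSumTerm, mul_div_assoc]
  rw [hsplit, sum_mul_sum, mul_sum]
  refine sum_congr rfl fun p hp => ?_
  rw [mul_sum]
  refine sum_congr rfl fun r _ => ?_
  rw [quiverTerm_eq_mul_qBinomialTerm, mem_antidiagonal.1 hp]

end QSeries

theorem trefoil_Rmatrix_quiver_form_general {K : Type*} [Field K] (q : K)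
    (hq : ∀ m : ℕ, 1 ≤ m → q ^ m ≠ 1) (N : ℕ) :
    (∑ d1 ∈ Finset.range (N + 1), ∑ d2 ∈ Finset.range (N + 1),
      if 2 * d1 + d2 = N then
        (-1 : K) ^ d1 * q ^ (d1 * (d1 + 1) / 2) * pochQ q (d1 + d2) /
          (pochQ q d1 * pochQ q d2)
      else 0) =
    ∑ a1 ∈ Finset.range (N + 1), ∑ b1 ∈ Finset.range (N + 1),
      ∑ a2 ∈ Finset.range (N + 1), ∑ b2 ∈ Finset.range (N + 1),
        if 2 * (a1 + b1) + a2 + b2 = N then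
          (-1 : K) ^ (b1 + a2) *
            q ^ ((a1 + b1) * (a1 + b1 + 1) / 2 + a1 * (a1 + 1) / 2 + a2 * (a2 + 1) / 2
                + a2 * (a1 + b1)) /
            (pochQ q a1 * pochQ q b1 * pochQ q a2 * pochQ q b2)
        else 0 := by
  change ∑ d1 ∈ range (N + 1), ∑ d2 ∈ range (N + 1),
      (if 2 * d1 + d2 = N then stateSumTerm q d1 d2 else 0) = _
  rw [sum_range_ite_eq_sum_range_ite_sum_antidiagonal]
  simp_rw [stateSumTerm_eq_sum_quiverTerm q hq]
  rfl

/-- Quiver form of the R-matrix state sum for the right-handed trefoil, stated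
coefficientwise in `K⟦Z⟧`: the coefficient of `Z^N` in
`∑_{d₁,d₂≥0} (−1)^{d₁} Z^{2d₁+d₂} q^{d₁(d₁+1)/2} (q;q)_{d₁+d₂}/((q;q)_{d₁}(q;q)_{d₂})`
equals the coefficient of `Z^N` in
`∑_{α₁,β₁,α₂,β₂≥0} (−1)^{β₁+α₂} Z^{2(α₁+β₁)+α₂+β₂}
q^{(α₁+β₁)(α₁+β₁+1)/2 + α₁(α₁+1)/2 + α₂(α₂+1)/2 + α₂(α₁+β₁)} / ∏(q;q)`. -/
theorem trefoil_Rmatrix_quiver_form {K : Type*} [Field K] (q : K) (hq0 : q ≠ 0)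
    (hq : ∀ m : ℕ, 1 ≤ m → q ^ m ≠ 1) (N : ℕ) :
    (∑ d1 ∈ Finset.range (N + 1), ∑ d2 ∈ Finset.range (N + 1),
      if 2 * d1 + d2 = N then
        (-1 : K) ^ d1 * q ^ (d1 * (d1 + 1) / 2) * pochQ q (d1 + d2) /
          (pochQ q d1 * pochQ q d2)
      else 0) =
    ∑ a1 ∈ Finset.range (N + 1), ∑ b1 ∈ Finset.range (N + 1),
      ∑ a2 ∈ Finset.range (N + 1), ∑ b2 ∈ Finset.range (N + 1),
        if 2 * (a1 + b1) + a2 + b2 = N then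
          (-1 : K) ^ (b1 + a2) *
            q ^ ((a1 + b1) * (a1 + b1 + 1) / 2 + a1 * (a1 + 1) / 2 + a2 * (a2 + 1) / 2
                + a2 * (a1 + b1)) /
            (pochQ q a1 * pochQ q b1 * pochQ q a2 * pochQ q b2)
        else 0 :=
  trefoil_Rmatrix_quiver_form_general q hq N
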